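/- Cycle-CTL* does not have the tree-model property: the formula E^cycle ⊤ is satisfiable (it holds in the one-world Kripke structure whose only transition is a self-loop), yet for every Kripke structure K whose underlying graph (W, R) is a tree with root w_I (i.e., R is the child relation of a tree, so no path ever returns to a previously visited world), we have K, w_I ⊭ E^cycle ⊤. -/

import Mathlib

namespace CycleCTL

universe u v

/-- A Kripke structure over a set `AP` of atomic propositions. -/
structure Kripke (AP : Type) : Type (u + 1) where
  World : Type u
  init : World
  R : World → World → Prop
  label : World → Set AP
  serial : ∀ w, ∃ v, R w v

variable {AP : Type}

/-- An (infinite) path of a Kripke structure. -/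
def IsPath (K : Kripke.{u} AP) (π : ℕ → K.World) : Prop :=
  ∀ i, K.R (π i) (π (i + 1))

/-- A cycle: a path visiting its first world infinitely often. -/
def IsCycle (K : Kripke.{u} AP) (π : ℕ → K.World) : Prop :=
  IsPath K π ∧ ∀ i, ∃ j, i < j ∧ π j = π 0

mutual
  /-- State formulas of Cycle-CTL*. -/
  inductive StateForm (AP : Type) : Type where
    | atom : AP → StateForm AP
    | not  : StateForm AP → StateForm AP
    | and  : StateForm AP → StateForm AP → StateForm AP
    | or   : StateForm AP → StateForm AP → StateForm AP
    | E    : PathForm AP → StateForm AP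
    | A    : PathForm AP → StateForm AP
    | Ec   : PathForm AP → StateForm AP
    | Ac   : PathForm AP → StateForm AP
  /-- Path formulas of Cycle-CTL*. -/
  inductive PathForm (AP : Type) : Type where
    | state : StateForm AP → PathForm AP
    | not   : PathForm AP → PathForm AP
    | and   : PathForm AP → PathForm AP → PathForm AP
    | or    : PathForm AP → PathForm AP → PathForm AP
    | next  : PathForm AP → PathForm AP
    | untl  : PathForm AP → PathForm AP → PathForm AP
end

mutual
  /-- Satisfaction of a state formula at a world. -/
  def SatS (K : Kripke.{u} AP) : K.World → StateForm AP → Prop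
    | w, .atom p => p ∈ K.label w
    | w, .not φ => ¬ SatS K w φ
    | w, .and φ₁ φ₂ => SatS K w φ₁ ∧ SatS K w φ₂
    | w, .or φ₁ φ₂ => SatS K w φ₁ ∨ SatS K w φ₂
    | w, .E ψ => ∃ π, IsPath K π ∧ π 0 = w ∧ SatP K π 0 ψ
    | w, .A ψ => ∀ π, IsPath K π → π 0 = w → SatP K π 0 ψ
    | w, .Ec ψ => ∃ π, IsCycle K π ∧ π 0 = w ∧ SatP K π 0 ψ
    | w, .Ac ψ => ∀ π, IsCycle K π → π 0 = w → SatP K π 0 ψ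
  /-- Satisfaction of a path formula on a path at a position. -/
  def SatP (K : Kripke.{u} AP) : (ℕ → K.World) → ℕ → PathForm AP → Prop
    | π, i, .state φ => SatS K (π i) φ
    | π, i, .not ψ => ¬ SatP K π i ψ
    | π, i, .and ψ₁ ψ₂ => SatP K π i ψ₁ ∧ SatP K π i ψ₂
    | π, i, .or ψ₁ ψ₂ => SatP K π i ψ₁ ∨ SatP K π i ψ₂
    | π, i, .next ψ => SatP K π (i + 1) ψ
    | π, i, .untl ψ₁ ψ₂ => ∃ k, SatP K π (i + k) ψ₂ ∧ ∀ j < k, SatP K π (i + j) ψ₁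
end

/-- `K ⊨ φ` : satisfaction at the initial world. -/
def Sat (K : Kripke.{u} AP) (φ : StateForm AP) : Prop := SatS K K.init φ

/-- `⊤` as a path formula, abbreviating `p ∨ ¬p`. -/
def topP (p : AP) : PathForm AP := .or (.state (.atom p)) (.not (.state (.atom p)))

/-- `F ψ` abbreviates `⊤ U ψ`. -/
def FP (p : AP) (ψ : PathForm AP) : PathForm AP := .untl (topP p) ψ

/-- `G ψ` abbreviates `¬(⊤ U ¬ψ)`. -/
def GP (p : AP) (ψ : PathForm AP) : PathForm AP := .not (FP p (.not ψ))


/-- `(W, R)` is a tree with root `r`: every node is reachable from the root, the relation is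
acyclic, every node has at most one parent, and the root has no parent. -/
def IsTree {W : Type u} (R : W → W → Prop) (r : W) : Prop :=
  (∀ w, Relation.ReflTransGen R r w) ∧
  (∀ w, ¬ Relation.TransGen R w w) ∧
  (∀ w v v', R v w → R v' w → v = v') ∧
  (∀ v, ¬ R v r)

/-- The one-world Kripke structure whose only transition is a self-loop. -/
def loopK (AP : Type) (S : Set AP) : Kripke.{0} AP where
  World := Unit
  init := ()
  R := fun _ _ => True
  label := fun _ => S
  serial := fun _ => ⟨(), trivial⟩

theorem satP_topP (K : Kripke.{u} AP) (π : ℕ → K.World) (i : ℕ) (p : AP) :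
    SatP K π i (topP p) :=
  em (p ∈ K.label (π i))

theorem satS_Ec_topP_iff (K : Kripke.{u} AP) (w : K.World) (p : AP) :
    SatS K w (.Ec (topP p)) ↔ ∃ π, IsCycle K π ∧ π 0 = w := by
  simp only [SatS, satP_topP, and_true]

theorem IsPath.transGen_of_lt {K : Kripke.{u} AP} {π : ℕ → K.World} (hπ : IsPath K π)
    {i j : ℕ} (hij : i < j) : Relation.TransGen K.R (π i) (π j) :=
  Nat.rel_of_forall_rel_succ_of_lt _ (fun n => .single (hπ n)) hij

theorem IsCycle.transGen_self {K : Kripke.{u} AP} {π : ℕ → K.World} (hπ : IsCycle K π) :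
    Relation.TransGen K.R (π 0) (π 0) := by
  obtain ⟨j, hj, hπj⟩ := hπ.2 0
  simpa only [hπj] using hπ.1.transGen_of_lt hj

theorem isCycle_loopK (S : Set AP) : IsCycle (loopK AP S) fun _ => () :=
  ⟨fun _ => trivial, fun i => ⟨i + 1, i.lt_succ_self, rfl⟩⟩

/-- Cycle-CTL* lacks the tree-model property: `E^cycle ⊤` holds in the one-world
self-loop structure, but fails at the root of every Kripke structure whose graph is a tree. -/
theorem stmt4 {AP : Type} (p : AP) (S : Set AP) :
    Sat (loopK AP S) (.Ec (topP p)) ∧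
    ∀ K : Kripke.{u} AP, IsTree K.R K.init → ¬ Sat K (.Ec (topP p)) := by
  refine ⟨(satS_Ec_topP_iff _ _ p).2 ⟨_, isCycle_loopK S, rfl⟩, ?_⟩
  rintro K ⟨-, hacyclic, -, -⟩ hsat
  obtain ⟨π, hπ, -⟩ := (satS_Ec_topP_iff _ _ p).1 hsat
  exact hacyclic _ hπ.transGen_self

end CycleCTL
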